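/- If a group G has a normal subgroup N with N isomorphic to ℤ and the quotient G/N isomorphic to ℤ², then G has a finite complete rewriting system. (This covers the group-theoretic case arising from closed Nil-geometry 3-manifolds.) -/

import Mathlib

/-- One step of rewriting: `w` rewrites to `w'` by replacing a factor `u`
(the left-hand side of a rule in `R`) with `v` (the right-hand side). -/
def RewStep {α : Type} (R : Set (FreeMonoid α × FreeMonoid α))
    (w w' : FreeMonoid α) : Prop :=
  ∃ x u v y : FreeMonoid α, (u, v) ∈ R ∧ w = x * u * y ∧ w' = x * v * y

/-- A word is irreducible if it contains no left-hand side of a rule as a factor. -/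
def RewIrreducible {α : Type} (R : Set (FreeMonoid α × FreeMonoid α))
    (w : FreeMonoid α) : Prop :=
  ¬ ∃ x u v y : FreeMonoid α, (u, v) ∈ R ∧ w = x * u * y

/-- `(π, R)` is a complete rewriting system for the group `G`:
(i) the induced monoid homomorphism `A* → G` is surjective and the monoid presented by
`⟨A ∣ u = v, (u,v) ∈ R⟩` maps isomorphically onto `G` (its defining congruence is exactly
the kernel congruence of the evaluation);
(ii) there is no infinite sequence of rewritings (Noetherian);
(iii) every element of `G` has exactly one irreducible representative word. -/
def IsCompleteRewritingSystem {α : Type} {G : Type*} [Group G] (π : α → G)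
    (R : Set (FreeMonoid α × FreeMonoid α)) : Prop :=
  Function.Surjective (FreeMonoid.lift π) ∧
  (∀ u v : FreeMonoid α,
      FreeMonoid.lift π u = FreeMonoid.lift π v ↔
        conGen (fun w w' => (w, w') ∈ R) u v) ∧
  (∀ f : ℕ → FreeMonoid α, ¬ ∀ m : ℕ, RewStep R (f m) (f (m + 1))) ∧
  (∀ g : G, ∃! w : FreeMonoid α, FreeMonoid.lift π w = g ∧ RewIrreducible R w)

/-- A group has a finite complete rewriting system if there are a finite alphabet `α`,
a map `π : α → G` and a finite set of rules `R` forming a complete rewriting system. -/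
def HasFiniteCompleteRewritingSystem (G : Type*) [Group G] : Prop :=
  ∃ (α : Type) (_ : Finite α) (π : α → G)
    (R : Set (FreeMonoid α × FreeMonoid α)),
    R.Finite ∧ IsCompleteRewritingSystem π R

/-!
Choose `a` generating `N ≅ ℤ` and lifts `b`, `c` of a basis of `G ⧸ N ≅ ℤ²`. Every element of `G`
is uniquely `a ^ i * b ^ j * c ^ m`; conjugation by `b` and `c` acts on `N` as `±1`, and
`c b = a ^ k b c`. Rewriting every adjacent pair of letters that violates the order
`a^± < b^± < c^±` (including `x x⁻¹`) into its normal form gives a finite system whose irreducible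
words are exactly the words `a^i b^j c^m`. It terminates because the letters act as strictly
increasing affine maps of `ℕ` that decrease along every rule.
-/

section Rewriting

open FreeMonoid

variable {α : Type} (R : Set (FreeMonoid α × FreeMonoid α))

theorem conGen_of_rewStep {w w' : FreeMonoid α} (h : RewStep R w w') :
    conGen (fun w w' => (w, w') ∈ R) w w' := by
  obtain ⟨x, u, v, y, huv, rfl, rfl⟩ := h
  exact ((conGen _).refl x |>.mul (ConGen.Rel.of _ _ huv)).mul ((conGen _).refl y)

theorem exists_rewIrreducible_conGen (hwf : WellFounded (flip (RewStep R)))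
    (w : FreeMonoid α) :
    ∃ w', RewIrreducible R w' ∧ conGen (fun w w' => (w, w') ∈ R) w w' := by
  induction w using hwf.induction with
  | _ w ih =>
    by_cases hw : RewIrreducible R w
    · exact ⟨w, hw, (conGen _).refl w⟩
    · obtain ⟨x, u, v, y, huv, rfl⟩ := not_not.mp hw
      have hstep : RewStep R (x * u * y) (x * v * y) := ⟨x, u, v, y, huv, rfl, rfl⟩
      obtain ⟨w', hw', hrel⟩ := ih _ hstep
      exact ⟨w', hw', (conGen _).trans (conGen_of_rewStep R hstep) hrel⟩

/-- Both sides of `lift π u = lift π v` reduce to irreducible words, which coincide by `hinj`. -/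
theorem isCompleteRewritingSystem_of_wellFounded {G : Type*} [Group G] (π : α → G)
    (hsound : ∀ u v, (u, v) ∈ R → lift π u = lift π v)
    (hwf : WellFounded (flip (RewStep R)))
    (hsurj : ∀ g, ∃ w, RewIrreducible R w ∧ lift π w = g)
    (hinj : ∀ w w', RewIrreducible R w → RewIrreducible R w' → lift π w = lift π w' → w = w') :
    IsCompleteRewritingSystem π R := by
  have hker : conGen (fun w w' => (w, w') ∈ R) ≤ Con.ker (lift π) :=
    Con.conGen_le.mpr fun u v h => (Con.ker_rel _).mpr (hsound u v h)
  refine ⟨fun g => (hsurj g).imp fun _ => And.right,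
    fun u v => ⟨fun h => ?_, fun h => (Con.ker_rel _).mp (hker h)⟩,
    fun f hf => ?_, fun g => ?_⟩
  · obtain ⟨u', hu', hu⟩ := exists_rewIrreducible_conGen R hwf u
    obtain ⟨v', hv', hv⟩ := exists_rewIrreducible_conGen R hwf v
    obtain rfl : u' = v' := hinj u' v' hu' hv' <| by
      rw [← (Con.ker_rel _).mp (hker hu), ← (Con.ker_rel _).mp (hker hv), h]
    exact (conGen _).trans hu ((conGen _).symm hv)
  · have : IsWellFounded _ (flip (RewStep R)) := ⟨hwf⟩
    obtain ⟨n, hn⟩ := WellFounded.not_rel_apply_succ (r := flip (RewStep R)) f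
    exact hn (hf n)
  · obtain ⟨w, hw, rfl⟩ := hsurj g
    exact ⟨w, ⟨rfl, hw⟩, fun w' ⟨hw'g, hw'⟩ => hinj w' w hw' hw hw'g⟩

theorem lift_mul_apply {β : Type*} (f : α → Function.End β) (u v : FreeMonoid α) (x : β) :
    lift f (u * v) x = lift f u (lift f v x) := by
  rw [map_mul]; rfl

theorem wellFounded_rewStep_of_strictMono (f : α → Function.End ℕ) (hf : ∀ a, StrictMono (f a))
    (hR : ∀ u v, (u, v) ∈ R → ∀ n, lift f v n < lift f u n) :
    WellFounded (flip (RewStep R)) := by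
  have hmono (w : FreeMonoid α) : StrictMono (lift f w) := by
    induction w using FreeMonoid.inductionOn' with
    | one => exact strictMono_id
    | of_mul a w ih =>
      intro m n hmn
      simpa only [lift_mul_apply, lift_eval_of] using hf a (ih hmn)
  refine Subrelation.wf (fun {w' w} h => ?_) (InvImage.wf (lift f · 0) wellFounded_lt)
  obtain ⟨x, u, v, y, huv, rfl, rfl⟩ := h
  simpa only [InvImage, lift_mul_apply] using hmono x (hR u v huv _)

end Rewriting

section Semiconj

variable {G : Type*} [Group G]

theorem SemiconjBy.inv_left_of_zpow {x y : G} {e : ℤ} (he : IsUnit e)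
    (h : SemiconjBy y x (x ^ e)) : SemiconjBy y⁻¹ x (x ^ e) := by
  simpa [← zpow_mul, Int.isUnit_mul_self he] using (SemiconjBy.inv_symm_left_iff.mpr h).zpow_right e

theorem SemiconjBy.inv_right_of_mul_zpow {a x y : G} {e n : ℤ} (hyx : SemiconjBy y x (a ^ n * x))
    (hxa : SemiconjBy x⁻¹ a (a ^ e)) : SemiconjBy y x⁻¹ (a ^ (-(e * n)) * x⁻¹) :=
  calc y * x⁻¹ = (a ^ n * x)⁻¹ * y := hyx.inv_right.eq
    _ = x⁻¹ * a ^ (-n) * y := by rw [mul_inv_rev, zpow_neg]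
    _ = a ^ (-(e * n)) * x⁻¹ * y := by rw [(hxa.zpow_right (-n)).eq, ← zpow_mul, mul_neg]

theorem SemiconjBy.inv_left_of_mul_zpow {a x y : G} {e n : ℤ} (hyx : SemiconjBy y x (a ^ n * x))
    (hya : SemiconjBy y⁻¹ a (a ^ e)) : SemiconjBy y⁻¹ x (a ^ (-(e * n)) * x) :=
  calc y⁻¹ * x = y⁻¹ * a ^ (-n) * (a ^ n * x) := by group
    _ = a ^ (-(e * n)) * (y⁻¹ * (a ^ n * x)) := by
      rw [(hya.zpow_right (-n)).eq, ← zpow_mul, mul_neg, mul_assoc]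
    _ = a ^ (-(e * n)) * x * y⁻¹ := by rw [hyx.inv_symm_left.eq, mul_assoc]

end Semiconj

namespace NilRewriting

open FreeMonoid

inductive Letter : Type
  | a | A | b | B | c | C
  deriving DecidableEq

instance : Fintype Letter :=
  ⟨{.a, .A, .b, .B, .c, .C}, fun x => by cases x <;> simp⟩

def rank : Letter → ℕ
  | .a | .A => 0
  | .b | .B => 1
  | .c | .C => 2

def MayPrecede (p q : Letter) : Prop := rank p < rank q ∨ p = q

instance : DecidableRel MayPrecede := fun _ _ => inferInstanceAs (Decidable (_ ∨ _))

instance : Trans MayPrecede MayPrecede MayPrecede where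
  trans := by
    rintro p q r (hpq | rfl) (hqr | rfl)
    exacts [.inl (hpq.trans hqr), .inl hpq, .inl hqr, .inr rfl]

/-- `p ^ i` as a word, `n` standing for the inverse of `p`. -/
def block (p n : Letter) (i : ℤ) : List Letter :=
  List.replicate i.natAbs (if 0 ≤ i then p else n)

def normalWord (t : ℤ × ℤ × ℤ) : List Letter :=
  block .a .A t.1 ++ block .b .B t.2.1 ++ block .c .C t.2.2

theorem mem_block {p n x : Letter} {i : ℤ} :
    x ∈ block p n i ↔ 0 < i ∧ x = p ∨ i < 0 ∧ x = n := by
  rcases lt_trichotomy i 0 with h | rfl | h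
  · simp [block, List.mem_replicate, h, h.ne, not_le.mpr h, not_lt.mpr h.le]
  · simp [block]
  · simp [block, List.mem_replicate, h, h.ne', h.le, not_lt.mpr h.le]

theorem cons_block_of_nonneg (p n : Letter) {i : ℤ} (hi : 0 ≤ i) :
    p :: block p n i = block p n (i + 1) := by
  simp only [block, if_pos hi, if_pos (by omega : 0 ≤ i + 1),
    show (i + 1).natAbs = i.natAbs + 1 by omega, List.replicate_succ]

theorem cons_block_of_nonpos (p n : Letter) {i : ℤ} (hi : i ≤ 0) :
    n :: block p n i = block p n (i - 1) := by
  rcases hi.lt_or_eq with hi | rfl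
  · simp only [block, if_neg (by omega : ¬ 0 ≤ i), if_neg (by omega : ¬ 0 ≤ i - 1),
      show (i - 1).natAbs = i.natAbs + 1 by omega, List.replicate_succ]
  · rfl

theorem pairwise_normalWord (t : ℤ × ℤ × ℤ) : (normalWord t).Pairwise MayPrecede := by
  have hblock (p n : Letter) (i : ℤ) : (block p n i).Pairwise MayPrecede :=
    List.pairwise_replicate.mpr (.inr (.inr rfl))
  have hrank {p n x : Letter} {i : ℤ} (hx : x ∈ block p n i) (h : rank p = rank n) :
      rank x = rank p := by
    rcases mem_block.mp hx with ⟨-, rfl⟩ | ⟨-, rfl⟩ <;> simp [h]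
  simp only [normalWord, List.pairwise_append, List.mem_append]
  refine ⟨⟨hblock _ _ _, hblock _ _ _, ?_⟩, hblock _ _ _, ?_⟩ <;>
    rintro x hx y hy <;> left
  · rw [hrank hx rfl, hrank hy rfl]; decide
  · rw [hrank hy rfl]
    rcases hx with hx | hx <;> rw [hrank hx rfl] <;> decide

theorem exists_cons_normalWord (p : Letter) (t : ℤ × ℤ × ℤ)
    (h : ∀ q ∈ normalWord t, MayPrecede p q) : ∃ t', p :: normalWord t = normalWord t' := by
  obtain ⟨i, j, m⟩ := t
  have hnot (q : Letter) (hq : ¬ MayPrecede p q) : q ∉ normalWord (i, j, m) :=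
    fun h' => hq (h q h')
  simp only [normalWord, mem_block, List.mem_append, not_or, not_and_or] at hnot
  have hblock0 (p n : Letter) : block p n 0 = [] := rfl
  cases p
  · have hi : 0 ≤ i := by simpa using hnot .A (by decide)
    exact ⟨(i + 1, j, m), by
      simp only [normalWord, ← List.cons_append, cons_block_of_nonneg _ _ hi]⟩
  · have hi : i ≤ 0 := by simpa using hnot .a (by decide)
    exact ⟨(i - 1, j, m), by
      simp only [normalWord, ← List.cons_append, cons_block_of_nonpos _ _ hi]⟩
  · obtain rfl : i = 0 :=
      le_antisymm (by simpa using hnot .a (by decide)) (by simpa using hnot .A (by decide))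
    have hj : 0 ≤ j := by simpa using hnot .B (by decide)
    exact ⟨(0, j + 1, m), by
      simp only [normalWord, hblock0, List.nil_append, ← List.cons_append,
        cons_block_of_nonneg _ _ hj]⟩
  · obtain rfl : i = 0 :=
      le_antisymm (by simpa using hnot .a (by decide)) (by simpa using hnot .A (by decide))
    have hj : j ≤ 0 := by simpa using hnot .b (by decide)
    exact ⟨(0, j - 1, m), by
      simp only [normalWord, hblock0, List.nil_append, ← List.cons_append,
        cons_block_of_nonpos _ _ hj]⟩
  · obtain rfl : i = 0 :=
      le_antisymm (by simpa using hnot .a (by decide)) (by simpa using hnot .A (by decide))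
    obtain rfl : j = 0 :=
      le_antisymm (by simpa using hnot .b (by decide)) (by simpa using hnot .B (by decide))
    have hm : 0 ≤ m := by simpa using hnot .C (by decide)
    exact ⟨(0, 0, m + 1), by
      simp only [normalWord, hblock0, List.nil_append, cons_block_of_nonneg _ _ hm]⟩
  · obtain rfl : i = 0 :=
      le_antisymm (by simpa using hnot .a (by decide)) (by simpa using hnot .A (by decide))
    obtain rfl : j = 0 :=
      le_antisymm (by simpa using hnot .b (by decide)) (by simpa using hnot .B (by decide))
    have hm : m ≤ 0 := by simpa using hnot .c (by decide)
    exact ⟨(0, 0, m - 1), by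
      simp only [normalWord, hblock0, List.nil_append, cons_block_of_nonpos _ _ hm]⟩

theorem pairwise_iff_exists_eq_normalWord (l : List Letter) :
    l.Pairwise MayPrecede ↔ ∃ t, l = normalWord t := by
  refine ⟨fun h => ?_, by rintro ⟨t, rfl⟩; exact pairwise_normalWord t⟩
  induction l with
  | nil => exact ⟨(0, 0, 0), rfl⟩
  | cons p l ih =>
    obtain ⟨hp, hl⟩ := List.pairwise_cons.mp h
    obtain ⟨t, rfl⟩ := ih hl
    exact exists_cons_normalWord p t hp

def aPow (i : ℤ) : FreeMonoid Letter := ofList (block .a .A i)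

/-- In a group where `b a b⁻¹ = a ^ e1`, `c a c⁻¹ = a ^ e2` and `c b = a ^ k b c`, these are the
normal forms of the products `p q` in `rules` below; the catch-all value `1` serves the pairs
`p p⁻¹`. -/
def rhs (e1 e2 k : ℤ) : Letter → Letter → FreeMonoid Letter
  | .b, .a => aPow e1 * of .b
  | .b, .A => aPow (-e1) * of .b
  | .B, .a => aPow e1 * of .B
  | .B, .A => aPow (-e1) * of .B
  | .c, .a => aPow e2 * of .c
  | .c, .A => aPow (-e2) * of .c
  | .C, .a => aPow e2 * of .C
  | .C, .A => aPow (-e2) * of .C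
  | .c, .b => aPow k * of .b * of .c
  | .c, .B => aPow (-(e1 * k)) * of .B * of .c
  | .C, .b => aPow (-(e2 * k)) * of .b * of .C
  | .C, .B => aPow (e1 * e2 * k) * of .B * of .C
  | _, _ => 1

def rules (e1 e2 k : ℤ) : Set (FreeMonoid Letter × FreeMonoid Letter) :=
  {r | ∃ p q, ¬ MayPrecede p q ∧ r = (of p * of q, rhs e1 e2 k p q)}

section Rules

variable (e1 e2 k : ℤ)

theorem rules_finite : (rules e1 e2 k).Finite :=
  (Set.finite_range fun pq : Letter × Letter => (of pq.1 * of pq.2, rhs e1 e2 k pq.1 pq.2)).subset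
    (by rintro _ ⟨p, q, -, rfl⟩; exact ⟨(p, q), rfl⟩)

theorem rewIrreducible_rules_iff_isChain (w : FreeMonoid Letter) :
    RewIrreducible (rules e1 e2 k) w ↔ (toList w).IsChain MayPrecede := by
  rw [List.isChain_iff_forall_rel_of_append_cons_cons, RewIrreducible]
  constructor
  · intro h p q l₁ l₂ hw
    by_contra hpq
    refine h ⟨ofList l₁, of p * of q, rhs e1 e2 k p q, ofList l₂, ⟨p, q, hpq, rfl⟩, ?_⟩
    apply toList.injective
    simp [hw]
  · rintro h ⟨x, _, _, y, ⟨p, q, hpq, hr⟩, rfl⟩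
    obtain ⟨rfl, rfl⟩ := Prod.mk.inj hr
    exact hpq (h (l₁ := toList x) (l₂ := toList y) (by simp))

theorem rewIrreducible_rules_iff (w : FreeMonoid Letter) :
    RewIrreducible (rules e1 e2 k) w ↔ ∃ t, w = ofList (normalWord t) := by
  rw [rewIrreducible_rules_iff_isChain, List.isChain_iff_pairwise,
    pairwise_iff_exists_eq_normalWord]
  rfl

/-- Every rule lowers the value at each point; e.g. for `c b → a ^ k b c` the shift `|k| + 1`
in the weight of `b` gives `6x + 3|k| + 4 > 6x + 2|k| + 3`. -/
def weight : Letter → Function.End ℕ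
  | .a | .A => fun x => x + 1
  | .b | .B => fun x => 2 * x + k.natAbs + 1
  | .c | .C => fun x => 3 * x + 1

theorem lift_weight_aPow (i : ℤ) (x : ℕ) : lift (weight k) (aPow i) x = x + i.natAbs := by
  suffices ∀ n, lift (weight k) (ofList (List.replicate n (if 0 ≤ i then .a else .A))) x = x + n
    from this _
  intro n
  induction n with
  | zero => rfl
  | succ n ih =>
    rw [List.replicate_succ, ofList_cons, lift_mul_apply, ih, lift_eval_of]
    split_ifs <;> (show _ + 1 = _; omega)

theorem lift_weight_rhs_lt (he1 : e1.natAbs = 1) (he2 : e2.natAbs = 1) {p q : Letter}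
    (hpq : ¬ MayPrecede p q) (x : ℕ) :
    lift (weight k) (rhs e1 e2 k p q) x < lift (weight k) (of p * of q) x := by
  cases p <;> cases q <;> (try exact absurd (by decide) hpq) <;>
    simp only [rhs, lift_mul_apply, lift_eval_of, lift_weight_aPow] <;>
    simp only [weight, map_one, Function.End.one_def, id, Int.natAbs_neg, Int.natAbs_mul, he1,
      he2] <;>
    omega

theorem wellFounded_rewStep_rules (he1 : IsUnit e1) (he2 : IsUnit e2) :
    WellFounded (flip (RewStep (rules e1 e2 k))) := by
  refine wellFounded_rewStep_of_strictMono _ (weight k) (fun l => ?_) ?_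
  · cases l <;> intro m n hmn <;> (simp only [weight]; omega)
  · rintro _ _ ⟨p, q, hpq, h⟩ x
    obtain ⟨rfl, rfl⟩ := Prod.mk.inj h
    exact lift_weight_rhs_lt e1 e2 k (Int.isUnit_iff_natAbs_eq.mp he1)
      (Int.isUnit_iff_natAbs_eq.mp he2) hpq x

end Rules

section Evaluation

variable {G : Type*} [Group G]

def letterValue (a b c : G) : Letter → G
  | .a => a
  | .A => a⁻¹
  | .b => b
  | .B => b⁻¹
  | .c => c
  | .C => c⁻¹

theorem lift_ofList_block (π : Letter → G) {p n : Letter} (hn : π n = (π p)⁻¹) (i : ℤ) :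
    lift π (ofList (block p n i)) = π p ^ i := by
  rw [lift_apply, toList_ofList, block, List.map_replicate, List.prod_replicate]
  split_ifs with hi
  · rw [← zpow_natCast, Int.natAbs_of_nonneg hi]
  · rw [hn, inv_pow, ← zpow_natCast, ← zpow_neg, Int.ofNat_natAbs_of_nonpos (by omega), neg_neg]

theorem lift_normalWord (a b c : G) (t : ℤ × ℤ × ℤ) :
    lift (letterValue a b c) (ofList (normalWord t)) = a ^ t.1 * b ^ t.2.1 * c ^ t.2.2 := by
  simp only [normalWord, ofList_append, map_mul,
    lift_ofList_block (letterValue a b c) (p := .a) (n := .A) rfl,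
    lift_ofList_block (letterValue a b c) (p := .b) (n := .B) rfl,
    lift_ofList_block (letterValue a b c) (p := .c) (n := .C) rfl, letterValue]

variable {a b c : G} {e1 e2 k : ℤ}

theorem lift_eq_of_mem_rules (he1 : IsUnit e1) (he2 : IsUnit e2) (hba : b * a = a ^ e1 * b)
    (hca : c * a = a ^ e2 * c) (hcb : c * b = a ^ k * b * c) {u v : FreeMonoid Letter}
    (huv : (u, v) ∈ rules e1 e2 k) :
    lift (letterValue a b c) u = lift (letterValue a b c) v := by
  obtain ⟨p, q, hpq, h⟩ := huv
  obtain ⟨rfl, rfl⟩ := Prod.mk.inj h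
  have hBa : SemiconjBy b⁻¹ a (a ^ e1) := .inv_left_of_zpow he1 hba
  have hCa : SemiconjBy c⁻¹ a (a ^ e2) := .inv_left_of_zpow he2 hca
  have hbA : b * a⁻¹ = a ^ (-e1) * b := by rw [zpow_neg]; exact SemiconjBy.inv_right hba
  have hBA : b⁻¹ * a⁻¹ = a ^ (-e1) * b⁻¹ := by rw [zpow_neg]; exact hBa.inv_right
  have hcA : c * a⁻¹ = a ^ (-e2) * c := by rw [zpow_neg]; exact SemiconjBy.inv_right hca
  have hCA : c⁻¹ * a⁻¹ = a ^ (-e2) * c⁻¹ := by rw [zpow_neg]; exact hCa.inv_right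
  have hcB : c * b⁻¹ = a ^ (-(e1 * k)) * b⁻¹ * c := SemiconjBy.inv_right_of_mul_zpow hcb hBa
  have hCb : c⁻¹ * b = a ^ (-(e2 * k)) * b * c⁻¹ := SemiconjBy.inv_left_of_mul_zpow hcb hCa
  have hCB : c⁻¹ * b⁻¹ = a ^ (e1 * e2 * k) * b⁻¹ * c⁻¹ := by
    rw [show e1 * e2 * k = -(e1 * -(e2 * k)) by ring]
    exact SemiconjBy.inv_right_of_mul_zpow hCb hBa
  cases p <;> cases q <;> (try exact absurd (by decide) hpq) <;>
    simp only [rhs, aPow, map_mul, map_one, lift_eval_of, letterValue,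
      lift_ofList_block (letterValue a b c) (p := .a) (n := .A) rfl] <;>
    first | exact mul_inv_cancel _ | exact inv_mul_cancel _ | assumption

end Evaluation

theorem hasFiniteCompleteRewritingSystem_of_normalForm {G : Type*} [Group G] (a b c : G)
    (e1 e2 k : ℤ) (he1 : IsUnit e1) (he2 : IsUnit e2) (hba : b * a = a ^ e1 * b)
    (hca : c * a = a ^ e2 * c) (hcb : c * b = a ^ k * b * c)
    (hnf : Function.Bijective fun t : ℤ × ℤ × ℤ => a ^ t.1 * b ^ t.2.1 * c ^ t.2.2) :
    HasFiniteCompleteRewritingSystem G := by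
  refine ⟨Letter, inferInstance, letterValue a b c, rules e1 e2 k, rules_finite e1 e2 k,
    isCompleteRewritingSystem_of_wellFounded _ _
      (fun _ _ => lift_eq_of_mem_rules he1 he2 hba hca hcb)
      (wellFounded_rewStep_rules e1 e2 k he1 he2) (fun g => ?_) (fun w w' hw hw' h => ?_)⟩
  · obtain ⟨t, rfl⟩ := hnf.2 g
    exact ⟨_, (rewIrreducible_rules_iff e1 e2 k _).mpr ⟨t, rfl⟩, lift_normalWord a b c t⟩
  · obtain ⟨t, rfl⟩ := (rewIrreducible_rules_iff e1 e2 k w).mp hw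
    obtain ⟨t', rfl⟩ := (rewIrreducible_rules_iff e1 e2 k w').mp hw'
    rw [lift_normalWord, lift_normalWord] at h
    rw [hnf.1 h]

end NilRewriting

section Extension

open Multiplicative

theorem MulEquiv.bijective_symm_ofAdd_one_zpow {H : Type*} [Group H]
    (e : H ≃* Multiplicative ℤ) : Function.Bijective (e.symm (ofAdd 1) ^ · : ℤ → H) := by
  convert e.symm.bijective.comp ofAdd.bijective using 1
  funext i
  rw [Function.comp_apply, ← map_zpow, ← ofAdd_zsmul, smul_eq_mul, mul_one]

theorem MulEquiv.symm_ofAdd_eq_zpow_mul_zpow {H : Type*} [Group H]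
    (e : H ≃* Multiplicative (ℤ × ℤ)) (t : ℤ × ℤ) :
    e.symm (ofAdd t) = e.symm (ofAdd (1, 0)) ^ t.1 * e.symm (ofAdd (0, 1)) ^ t.2 := by
  apply e.injective
  simp [← ofAdd_zsmul, ← ofAdd_add]

variable {G : Type*} [Group G] {N : Subgroup G} [N.Normal]

theorem bijective_mk_out_zpow_mul_out_zpow (e : G ⧸ N ≃* Multiplicative (ℤ × ℤ)) :
    Function.Bijective fun t : ℤ × ℤ =>
      (((e.symm (ofAdd (1, 0))).out ^ t.1 * (e.symm (ofAdd (0, 1))).out ^ t.2 : G) : G ⧸ N) := by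
  convert e.symm.bijective.comp ofAdd.bijective using 1
  funext t
  rw [Function.comp_apply, e.symm_ofAdd_eq_zpow_mul_zpow t, QuotientGroup.mk_mul,
    QuotientGroup.mk_zpow, QuotientGroup.mk_zpow, QuotientGroup.out_eq', QuotientGroup.out_eq']

theorem bijective_zpow_mul {a : N} (ha : Function.Bijective (a ^ · : ℤ → N)) {f : ℤ × ℤ → G}
    (hf : Function.Bijective fun t => (f t : G ⧸ N)) :
    Function.Bijective fun s : ℤ × (ℤ × ℤ) => (a : G) ^ s.1 * f s.2 := by
  have hmk (i : ℤ) (g : G) : ((a ^ i * g : G) : G ⧸ N) = g := by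
    rw [QuotientGroup.mk_mul, (QuotientGroup.eq_one_iff _).mpr (N.zpow_mem a.2 i), one_mul]
  refine ⟨fun ⟨i, t⟩ ⟨i', t'⟩ h => ?_, fun g => ?_⟩
  · obtain rfl : t = t' := hf.1 <| by simpa only [hmk] using congrArg (fun g : G => (g : G ⧸ N)) h
    obtain rfl : i = i' := ha.1 <| Subtype.ext <| by simpa using h
    rfl
  · obtain ⟨t, ht⟩ := hf.2 g
    obtain ⟨i, hi⟩ := ha.2 ⟨g / f t, QuotientGroup.eq_iff_div_mem.mp ht.symm⟩
    exact ⟨(i, t), by simp [← Subgroup.coe_zpow, hi]⟩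

/-- Conjugation by any element acts on `N ≅ ℤ` as an automorphism, hence as `±1`. -/
theorem exists_isUnit_mul_eq_zpow_mul {a : N} (ha : Function.Bijective (a ^ · : ℤ → N)) (x : G) :
    ∃ e : ℤ, IsUnit e ∧ x * a = (a : G) ^ e * x := by
  have hzpow (g : G) (hg : g ∈ N) : ∃ i : ℤ, (a : G) ^ i = g :=
    (ha.2 ⟨g, hg⟩).imp fun i hi => by rw [← Subgroup.coe_zpow]; exact congrArg Subtype.val hi
  obtain ⟨s, hs⟩ := hzpow _ (‹N.Normal›.conj_mem a a.2 x)
  obtain ⟨t, ht⟩ := hzpow _ (‹N.Normal›.conj_mem a a.2 x⁻¹)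
  have hts : t * s = 1 := ha.1 <| Subtype.ext <| by
    calc ((a ^ (t * s) : N) : G) = (x⁻¹ * a * x⁻¹⁻¹) ^ s := by
          rw [zpow_mul, Subgroup.coe_zpow, Subgroup.coe_zpow, ht]
      _ = x⁻¹ * (x * a * x⁻¹) * x⁻¹⁻¹ := by rw [conj_zpow, hs]
      _ = ((a ^ (1 : ℤ) : N) : G) := by rw [zpow_one]; group
  exact ⟨s, IsUnit.of_mul_eq_one_right t hts, by rw [hs]; group⟩

theorem exists_mul_eq_zpow_mul_mul {a : N} (ha : Function.Surjective (a ^ · : ℤ → N)) {x y : G}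
    (hxy : ((x * y : G) : G ⧸ N) = y * x) : ∃ k : ℤ, x * y = (a : G) ^ k * y * x := by
  obtain ⟨k, hk⟩ := ha ⟨x * y / (y * x), QuotientGroup.eq_iff_div_mem.mp hxy⟩
  refine ⟨k, ?_⟩
  rw [← Subgroup.coe_zpow, show a ^ k = _ from hk, Subgroup.coe_mk, mul_assoc, div_mul_cancel]

end Extension

/-- If G has a normal subgroup N ≅ ℤ with G/N ≅ ℤ², then G has a
finite complete rewriting system (the Nil-geometry case). -/
theorem nilCase_hasFiniteCompleteRewritingSystem
    (G : Type) [Group G] (N : Subgroup G) [N.Normal]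
    (e₁ : N ≃* Multiplicative ℤ)
    (e₂ : G ⧸ N ≃* Multiplicative (ℤ × ℤ)) :
    HasFiniteCompleteRewritingSystem G := by
  set a : N := e₁.symm (Multiplicative.ofAdd 1)
  set b : G := (e₂.symm (Multiplicative.ofAdd (1, 0))).out
  set c : G := (e₂.symm (Multiplicative.ofAdd (0, 1))).out
  have ha : Function.Bijective (a ^ · : ℤ → N) := e₁.bijective_symm_ofAdd_one_zpow
  obtain ⟨e1, he1, hba⟩ := exists_isUnit_mul_eq_zpow_mul ha b
  obtain ⟨e2, he2, hca⟩ := exists_isUnit_mul_eq_zpow_mul ha c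
  obtain ⟨k, hcb⟩ := exists_mul_eq_zpow_mul_mul ha.2 (x := c) (y := b) <| e₂.injective <| by
    rw [QuotientGroup.mk_mul, map_mul, map_mul, mul_comm]
  refine NilRewriting.hasFiniteCompleteRewritingSystem_of_normalForm (a : G) b c e1 e2 k he1 he2
    hba hca hcb ?_
  simpa only [mul_assoc] using bijective_zpow_mul ha (bijective_mk_out_zpow_mul_out_zpow e₂)
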